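/- arXiv:1411.2252 — 5 statements merged into one kernel-verified Lean document; each statement's English description precedes it below -/
import Mathlib

section
/- Let p/q be a continued-fraction convergent of a real number α (so that |α − p/q| < 1/q² and gcd(p,q)=1). Then for every real θ, |Σ_{i=1}^{q} ({θ + iα} − 1/2)| < 3/2, where {x} denotes the fractional part of x. -/
/-!
Write `α = p / q + ε`. With `m = ⌊qθ⌋` and `u = {qθ}`, the fractional part of `θ + i p / q` is
`(r_i + u) / q`, where `r_i = (m + i p) mod q` runs over `0, …, q - 1` as `i` runs over `1, …, q`
because `p` is a unit mod `q`. So these points are `1/q`-separated and their centred sum is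
`u - 1/2 ∈ [-1/2, 1/2)`. Moving the `i`-th point by `i ε` (all of one sign, each of size `< 1/q`,
total `< 1`) shifts every fractional part by exactly `i ε`, except for the at most one point lying
within `1/q` of the wrap-around point, which jumps by `±1` in the opposite direction; hence the
total change lies in `(-1, 1)`.
-/

open Finset
open Int (fract)

def residue (m p : ℤ) (q i : ℕ) : ℕ := ((m + i * p) % q).toNat

section ArithmeticProgression

variable {p : ℤ} {q : ℕ}

lemma natCast_residue (m : ℤ) (hq : 0 < q) (i : ℕ) :
    (residue m p q i : ℤ) = (m + i * p) % q :=
  Int.toNat_of_nonneg (Int.emod_nonneg _ (by omega))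

lemma residue_lt (m : ℤ) (hq : 0 < q) (i : ℕ) : residue m p q i < q := by
  have := Int.emod_lt_of_pos (m + i * p) (by omega : (0 : ℤ) < q)
  rw [← natCast_residue m hq] at this
  omega

lemma residue_injOn (m : ℤ) (hq : 0 < q) (hgcd : Int.gcd p q = 1) :
    Set.InjOn (residue m p q) (Icc 1 q) := by
  intro i hi j hj hij
  have h : m + i * p ≡ m + j * p [ZMOD q] := by
    rw [Int.ModEq, ← natCast_residue m hq, ← natCast_residue m hq, hij]
  have h' := Int.ModEq.cancel_right_div_gcd (by omega) (h.add_left_cancel' m)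
  rw [Int.gcd_comm, hgcd, Nat.cast_one, Int.ediv_one, Int.natCast_modEq_iff] at h'
  simp only [coe_Icc, Set.mem_Icc] at hi hj
  exact h'.eq_of_abs_lt (abs_lt.2 ⟨by omega, by omega⟩)

lemma fract_add_mul_div_eq (θ : ℝ) (hq : 0 < q) (i : ℕ) :
    fract (θ + i * (p / q)) = (residue ⌊q * θ⌋ p q i + fract (q * θ)) / q := by
  have hq' : (0 : ℝ) < q := Nat.cast_pos.2 hq
  have hr : (residue ⌊q * θ⌋ p q i : ℝ) + 1 ≤ q := by exact_mod_cast residue_lt _ hq i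
  have hdiv := Int.emod_add_mul_ediv (⌊q * θ⌋ + i * p) q
  rw [← natCast_residue _ hq] at hdiv
  have hdiv' : (residue ⌊q * θ⌋ p q i : ℝ) + q * (((⌊q * θ⌋ + i * p) / q : ℤ) : ℝ)
      = ⌊q * θ⌋ + i * p := by exact_mod_cast hdiv
  rw [Int.fract_eq_iff]
  refine ⟨by positivity, ?_, (⌊q * θ⌋ + i * p) / q, ?_⟩
  · rw [div_lt_one hq']
    linarith [Int.fract_lt_one ((q : ℝ) * θ)]
  · have hθ := Int.floor_add_fract ((q : ℝ) * θ)
    generalize ⌊(q : ℝ) * θ⌋ = m at hdiv' hθ ⊢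
    generalize fract ((q : ℝ) * θ) = u at hθ ⊢
    field_simp
    linear_combination -hdiv' - hθ

lemma sum_fract_add_mul_div (θ : ℝ) (hq : 0 < q) (hgcd : Int.gcd p q = 1) :
    ∑ i ∈ Icc 1 q, fract (θ + i * (p / q)) = fract (q * θ) + (q - 1) / 2 := by
  have hinj := residue_injOn ⌊q * θ⌋ hq hgcd
  have himage : (Icc 1 q).image (residue ⌊q * θ⌋ p q) = range q :=
    eq_of_subset_of_card_le
      (fun k hk => by
        obtain ⟨i, -, rfl⟩ := mem_image.1 hk
        exact mem_range.2 (residue_lt _ hq i))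
      (by rw [card_image_of_injOn hinj]; simp)
  have gauss : (∑ k ∈ range q, (k : ℝ)) * 2 = q * (q - 1) := by
    have := sum_range_id_mul_two q
    rw [← Nat.cast_inj (R := ℝ)] at this
    push_cast [Nat.cast_sub hq] at this
    exact this
  simp_rw [fract_add_mul_div_eq θ hq]
  rw [← sum_image (f := fun k : ℕ => ((k : ℝ) + fract (q * θ)) / q) hinj, himage, ← sum_div,
    sum_add_distrib, sum_const, card_range, nsmul_eq_mul]
  field_simp
  linear_combination gauss

lemma one_div_le_abs_fract_add_mul_div_sub (θ : ℝ) (hq : 0 < q) (hgcd : Int.gcd p q = 1)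
    {i j : ℕ} (hi : i ∈ Icc 1 q) (hj : j ∈ Icc 1 q) (hij : i ≠ j) :
    1 / q ≤ |fract (θ + i * (p / q)) - fract (θ + j * (p / q))| := by
  have hne : residue ⌊q * θ⌋ p q i ≠ residue ⌊q * θ⌋ p q j :=
    fun h => hij (residue_injOn _ hq hgcd hi hj h)
  have hq' : (0 : ℝ) < q := Nat.cast_pos.2 hq
  rw [fract_add_mul_div_eq θ hq, fract_add_mul_div_eq θ hq, ← sub_div, add_sub_add_right_eq_sub,
    abs_div, abs_of_pos hq']
  gcongr
  exact_mod_cast Int.one_le_abs (sub_ne_zero.2 (Nat.cast_injective.ne hne))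

end ArithmeticProgression

section Perturbation

lemma fract_add_eq_of_mem_Ico {x δ : ℝ} (h : fract x + δ ∈ Set.Ico 0 1) :
    fract (x + δ) = fract x + δ :=
  Int.fract_eq_iff.2 ⟨h.1, h.2, ⌊x⌋, by rw [← Int.self_sub_fract]; ring⟩

lemma fract_add_le_of_nonneg {x δ : ℝ} (hδ : 0 ≤ δ) : fract (x + δ) ≤ fract x + δ := by
  by_cases h : fract x + δ < 1
  · exact (fract_add_eq_of_mem_Ico ⟨by linarith [Int.fract_nonneg x], h⟩).le
  · linarith [Int.fract_lt_one (x + δ)]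

lemma le_fract_add_of_nonpos {x δ : ℝ} (hδ : δ ≤ 0) : fract x + δ ≤ fract (x + δ) := by
  by_cases h : 0 ≤ fract x + δ
  · exact (fract_add_eq_of_mem_Ico ⟨h, by linarith [Int.fract_lt_one x]⟩).ge
  · linarith [Int.fract_nonneg (x + δ)]

lemma one_le_fract_add_of_fract_add_lt {x δ : ℝ} (hδ : 0 ≤ δ) (h : fract (x + δ) < fract x) :
    1 ≤ fract x + δ := by
  by_contra! h'
  rw [fract_add_eq_of_mem_Ico ⟨by linarith [Int.fract_nonneg x], h'⟩] at h
  linarith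

lemma fract_add_neg_of_lt_fract_add {x δ : ℝ} (hδ : δ ≤ 0) (h : fract x < fract (x + δ)) :
    fract x + δ < 0 := by
  by_contra! h'
  rw [fract_add_eq_of_mem_Ico ⟨h', by linarith [Int.fract_lt_one x]⟩] at h
  linarith

variable {ι : Type*} {s : Finset ι}

lemma card_filter_mem_Ico_le_one {f : ι → ℝ} {η : ℝ}
    (hsep : ∀ i ∈ s, ∀ j ∈ s, i ≠ j → η ≤ |f i - f j|) (a : ℝ) :
    #{i ∈ s | f i ∈ Set.Ico a (a + η)} ≤ 1 := by
  refine card_le_one.2 fun i hi j hj => by_contra fun hij => ?_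
  simp only [mem_filter, Set.mem_Ico] at hi hj
  have := hsep i hi.1 j hj.1 hij
  have : |f i - f j| < η := abs_sub_lt_iff.2 ⟨by linarith, by linarith⟩
  linarith

lemma lt_sum_of_card_filter_neg_le_one {t : ι → ℝ} {c : ℝ} (hc : c < 0)
    (ht : ∀ i ∈ s, c < t i) (hcard : #{i ∈ s | t i < 0} ≤ 1) : c < ∑ i ∈ s, t i := by
  calc c < ∑ i ∈ s with t i < 0, t i := by
        rcases Nat.le_one_iff_eq_zero_or_eq_one.1 hcard with h | h
        · rwa [card_eq_zero.1 h, sum_empty]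
        · obtain ⟨i, hi⟩ := card_eq_one.1 h
          rw [hi, sum_singleton]
          exact ht i (mem_filter.1 (hi ▸ mem_singleton_self i)).1
    _ ≤ ∑ i ∈ s, t i :=
        sum_le_sum_of_subset_of_nonneg (filter_subset _ _)
          fun i hi hi' => not_lt.1 fun h => hi' (mem_filter.2 ⟨hi, h⟩)

variable {x δ : ι → ℝ} {η : ℝ}

lemma sum_fract_add_sub_fract_mem_Ioo_of_nonneg
    (hsep : ∀ i ∈ s, ∀ j ∈ s, i ≠ j → η ≤ |fract (x i) - fract (x j)|)
    (hδ : ∀ i ∈ s, 0 ≤ δ i ∧ δ i < η) (hsum : ∑ i ∈ s, δ i < 1) :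
    ∑ i ∈ s, (fract (x i + δ i) - fract (x i)) ∈ Set.Ioo (-1) 1 := by
  refine ⟨lt_sum_of_card_filter_neg_le_one (by norm_num) (fun i _ => ?_) ?_, ?_⟩
  · linarith [Int.fract_nonneg (x i + δ i), Int.fract_lt_one (x i)]
  · refine (card_le_card fun i hi => ?_).trans (card_filter_mem_Ico_le_one hsep (1 - η))
    rw [mem_filter] at hi ⊢
    have := one_le_fract_add_of_fract_add_lt (hδ i hi.1).1 (sub_neg.1 hi.2)
    exact ⟨hi.1, by linarith [(hδ i hi.1).2], by linarith [Int.fract_lt_one (x i)]⟩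
  · calc _ ≤ ∑ i ∈ s, δ i :=
          sum_le_sum fun i hi => sub_le_iff_le_add'.2 (fract_add_le_of_nonneg (hδ i hi).1)
      _ < 1 := hsum

lemma sum_fract_add_sub_fract_mem_Ioo_of_nonpos
    (hsep : ∀ i ∈ s, ∀ j ∈ s, i ≠ j → η ≤ |fract (x i) - fract (x j)|)
    (hδ : ∀ i ∈ s, δ i ≤ 0 ∧ -η < δ i) (hsum : -1 < ∑ i ∈ s, δ i) :
    ∑ i ∈ s, (fract (x i + δ i) - fract (x i)) ∈ Set.Ioo (-1) 1 := by
  refine ⟨?_, neg_lt_neg_iff.1 ?_⟩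
  · calc -1 < ∑ i ∈ s, δ i := hsum
      _ ≤ _ := sum_le_sum fun i hi => le_sub_iff_add_le'.2 (le_fract_add_of_nonpos (hδ i hi).1)
  rw [← sum_neg_distrib]
  refine lt_sum_of_card_filter_neg_le_one (by norm_num) (fun i _ => ?_) ?_
  · linarith [Int.fract_nonneg (x i), Int.fract_lt_one (x i + δ i)]
  · refine (card_le_card fun i hi => ?_).trans (card_filter_mem_Ico_le_one hsep 0)
    rw [mem_filter] at hi ⊢
    have := fract_add_neg_of_lt_fract_add (hδ i hi.1).1 (by linarith [hi.2])
    exact ⟨hi.1, Int.fract_nonneg _, by linarith [(hδ i hi.1).2]⟩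

lemma abs_sum_fract_add_sub_fract_lt_one
    (hsep : ∀ i ∈ s, ∀ j ∈ s, i ≠ j → η ≤ |fract (x i) - fract (x j)|)
    (hδ : ∀ i ∈ s, |δ i| < η) (hsign : (∀ i ∈ s, 0 ≤ δ i) ∨ ∀ i ∈ s, δ i ≤ 0)
    (hsum : |∑ i ∈ s, δ i| < 1) :
    |∑ i ∈ s, (fract (x i + δ i) - fract (x i))| < 1 := by
  rw [abs_lt]
  rcases hsign with h | h
  · exact sum_fract_add_sub_fract_mem_Ioo_of_nonneg hsep
      (fun i hi => ⟨h i hi, (abs_lt.1 (hδ i hi)).2⟩) (abs_lt.1 hsum).2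
  · exact sum_fract_add_sub_fract_mem_Ioo_of_nonpos hsep
      (fun i hi => ⟨h i hi, (abs_lt.1 (hδ i hi)).1⟩) (abs_lt.1 hsum).1

end Perturbation

lemma abs_natCast_mul_lt_one_div {ε : ℝ} {q i : ℕ} (hq : 0 < q) (hε : |ε| < 1 / q ^ 2)
    (hi : i ≤ q) : |(i : ℝ) * ε| < 1 / q := by
  have hiq : (i : ℝ) ≤ q := by exact_mod_cast hi
  have hq' : (0 : ℝ) < q := Nat.cast_pos.2 hq
  calc |(i : ℝ) * ε| = i * |ε| := by rw [abs_mul, Nat.abs_cast]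
    _ ≤ q * |ε| := by gcongr
    _ < q * (1 / q ^ 2) := by gcongr
    _ = 1 / q := by field_simp

theorem fract_sum_bound (α θ : ℝ) (p : ℤ) (q : ℕ) (hq : 0 < q)
    (hgcd : Int.gcd p q = 1) (happrox : |α - p / q| < 1 / q ^ 2) :
    |∑ i ∈ Finset.Icc 1 q, (Int.fract (θ + i * α) - 1 / 2)| < 3 / 2 := by
  set ε := α - p / q with hε
  have hδ : ∀ i ∈ Icc 1 q, |(i : ℝ) * ε| < 1 / q :=
    fun i hi => abs_natCast_mul_lt_one_div hq happrox (mem_Icc.1 hi).2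
  have hsum : |∑ i ∈ Icc 1 q, (i : ℝ) * ε| < 1 :=
    calc _ ≤ ∑ i ∈ Icc 1 q, |(i : ℝ) * ε| := abs_sum_le_sum_abs _ _
      _ < ∑ i ∈ Icc 1 q, (1 / q : ℝ) := sum_lt_sum_of_nonempty (nonempty_Icc.2 hq) hδ
      _ = 1 := by simp [hq.ne']
  have hsign : (∀ i ∈ Icc 1 q, 0 ≤ (i : ℝ) * ε) ∨ ∀ i ∈ Icc 1 q, (i : ℝ) * ε ≤ 0 :=
    (le_total 0 ε).imp (fun h i _ => by positivity)
      (fun h i _ => mul_nonpos_of_nonneg_of_nonpos (Nat.cast_nonneg i) h)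
  have hpert := abs_sum_fract_add_sub_fract_lt_one
    (fun i hi j hj => one_div_le_abs_fract_add_mul_div_sub θ hq hgcd hi hj) hδ hsign hsum
  have hsplit : ∑ i ∈ Icc 1 q, (fract (θ + i * α) - 1 / 2) = fract (q * θ) - 1 / 2 +
      ∑ i ∈ Icc 1 q, (fract (θ + i * (p / q) + i * ε) - fract (θ + i * (p / q))) := by
    have hα : ∀ i : ℕ, θ + i * α = θ + i * (p / q) + i * ε := fun i => by rw [hε]; ring
    simp only [hα, sum_sub_distrib, sum_fract_add_mul_div θ hq hgcd, sum_const, Nat.card_Icc,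
      nsmul_eq_mul]
    push_cast
    ring
  rw [hsplit, abs_lt]
  rw [abs_lt] at hpert
  constructor <;> linarith [Int.fract_nonneg ((q : ℝ) * θ), Int.fract_lt_one ((q : ℝ) * θ)]
end

section
/- If n ≥ 1 has Zeckendorf representation n = Σ_{s=1}^{m} b_s F_s with b_m = 1, then m ≤ ⌊(log n + 1)/log(1+ω)⌋ and the number of nonzero digits Σ b_s is at most ⌊(log n + 1)/log(2+ω)⌋, where ω = (√5 − 1)/2. -/
/-!
Every term of `n`'s representation is nonnegative, so the leading term gives `F_m ≤ n`; and
`k` nonzero digits with no two adjacent force `n ≥ F_1 + F_3 + ⋯ + F_{2k-1} = F_{2k}`.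
Both bounds then follow from `φ ^ j ≤ e · F_j` (for `j ≥ 1`), which comes from `φ ^ k ≤ F_{k+2}`
and `φ² = φ + 1 < e`.
-/

open Finset Real
open scoped goldenRatio

namespace Real

lemma goldenRatio_pow_le_fib_add_two (k : ℕ) : φ ^ k ≤ Nat.fib (k + 2) := by
  rw [← fib_succ_sub_goldenConj_mul_fib, Nat.fib_add_two, Nat.cast_add]
  nlinarith [neg_one_lt_goldenConj, Nat.cast_nonneg (α := ℝ) (Nat.fib k)]

lemma log_goldenRatio_le_half : log φ ≤ 1 / 2 := by
  have hsqrt : √5 < 2.24 := (sqrt_lt' (by norm_num)).mpr (by norm_num)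
  have hsq : φ ^ 2 ≤ exp 1 := by
    rw [goldenRatio_sq]
    linarith [exp_one_gt_d9, show φ = (1 + √5) / 2 from rfl]
  have := log_le_log (by positivity) hsq
  rw [log_pow, log_exp] at this
  push_cast at this
  linarith

lemma mul_log_goldenRatio_le_log_fib_add_one (j : ℕ) : j * log φ ≤ log (Nat.fib j) + 1 := by
  have hhalf := log_goldenRatio_le_half
  match j with
  | 0 => simp
  | 1 => simpa using hhalf.trans (by norm_num)
  | k + 2 =>
    have hk : k * log φ ≤ log (Nat.fib (k + 2)) := by
      rw [← log_pow]
      exact log_le_log (by positivity) (goldenRatio_pow_le_fib_add_two k)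
    push_cast
    linarith

lemma mul_log_goldenRatio_le_of_fib_le {j n : ℕ} (h : Nat.fib j ≤ n) :
    j * log φ ≤ log n + 1 := by
  have hlog : log (Nat.fib j) ≤ log n := by
    rcases Nat.eq_zero_or_pos (Nat.fib j) with h0 | hpos
    · simpa [h0] using log_natCast_nonneg n
    · exact log_le_log (by exact_mod_cast hpos) (by exact_mod_cast h)
  linarith [mul_log_goldenRatio_le_log_fib_add_one j]

end Real

section Zeckendorf

variable {b : ℕ → ℕ}

lemma fib_le_sum_mul_fib {m : ℕ} (hbm : b m = 1) :
    Nat.fib m ≤ ∑ s ∈ Icc 1 m, b s * Nat.fib s := by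
  rcases Nat.eq_zero_or_pos m with rfl | hm
  · simp
  · simpa [hbm] using single_le_sum (f := fun s ↦ b s * Nat.fib s)
      (fun _ _ ↦ Nat.zero_le _) (mem_Icc.mpr ⟨hm, le_rfl⟩)

/-- The first conjunct is carried along only to make the induction go through. -/
lemma fib_two_mul_sum_le_sum_mul_fib (hb : ∀ s, b s ≤ 1)
    (hnoconsec : ∀ s, b s = 1 → b (s + 1) = 0) (m : ℕ) :
    2 * ∑ s ∈ Icc 1 m, b s ≤ m + 1 ∧
      Nat.fib (2 * ∑ s ∈ Icc 1 m, b s) ≤ ∑ s ∈ Icc 1 m, b s * Nat.fib s := by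
  induction m using Nat.twoStepInduction with
  | zero => simp
  | one => rcases Nat.le_one_iff_eq_zero_or_eq_one.mp (hb 1) with h | h <;> simp [h]
  | more m ih₀ ih₁ =>
    have hsplit (f : ℕ → ℕ) : ∑ s ∈ Icc 1 (m + 2), f s = ∑ s ∈ Icc 1 (m + 1), f s + f (m + 2) :=
      sum_Icc_succ_top (by omega) f
    rw [hsplit, hsplit]
    rcases Nat.le_one_iff_eq_zero_or_eq_one.mp (hb (m + 2)) with hlast | hlast
    · simp only [hlast, add_zero, zero_mul]
      exact ⟨by omega, ih₁.2⟩
    · have hprev : b (m + 1) = 0 := by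
        rcases Nat.le_one_iff_eq_zero_or_eq_one.mp (hb (m + 1)) with h | h
        · exact h
        · simpa [hlast] using hnoconsec (m + 1) h
      rw [sum_Icc_succ_top (by omega), sum_Icc_succ_top (by omega), hprev, hlast]
      simp only [add_zero, zero_mul, one_mul]
      obtain ⟨hlen, hfib⟩ := ih₀
      refine ⟨by omega, ?_⟩
      rw [mul_add, mul_one, Nat.fib_add_two]
      have := Nat.fib_mono (show 2 * ∑ s ∈ Icc 1 m, b s + 1 ≤ m + 2 by omega)
      omega

end Zeckendorf

theorem zeckendorf_length_general (n m : ℕ) (b : ℕ → ℕ)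
    (hb : ∀ s, b s ≤ 1) (hbm : b m = 1)
    (hnoconsec : ∀ s, b s = 1 → b (s + 1) = 0)
    (hsum : n = ∑ s ∈ Finset.Icc 1 m, b s * Nat.fib s) :
    (m : ℤ) ≤ ⌊(Real.log n + 1) / Real.log (1 + (Real.sqrt 5 - 1) / 2)⌋ ∧
      ((∑ s ∈ Finset.Icc 1 m, b s : ℕ) : ℤ) ≤
        ⌊(Real.log n + 1) / Real.log (2 + (Real.sqrt 5 - 1) / 2)⌋ := by
  have hφ : 1 + (√5 - 1) / 2 = φ := by ring
  have hφsq : 2 + (√5 - 1) / 2 = φ ^ 2 := by rw [goldenRatio_sq]; ring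
  have hlog : 0 < log φ := log_pos one_lt_goldenRatio
  have hdigits := (fib_two_mul_sum_le_sum_mul_fib hb hnoconsec m).2
  rw [hφ, hφsq, log_pow, Int.le_floor, Int.le_floor, Int.cast_natCast, Int.cast_natCast,
    le_div_iff₀ hlog, le_div_iff₀ (by positivity)]
  constructor
  · exact mul_log_goldenRatio_le_of_fib_le (hsum ▸ fib_le_sum_mul_fib hbm)
  · have := mul_log_goldenRatio_le_of_fib_le (hsum ▸ hdigits)
    push_cast at this ⊢
    linarith

theorem zeckendorf_length (n m : ℕ) (b : ℕ → ℕ) (hn : 1 ≤ n)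
    (hb : ∀ s, b s ≤ 1) (hbm : b m = 1) (hhi : ∀ s, m < s → b s = 0)
    (hnoconsec : ∀ s, b s = 1 → b (s + 1) = 0)
    (hsum : n = ∑ s ∈ Finset.Icc 1 m, b s * Nat.fib s) :
    (m : ℤ) ≤ ⌊(Real.log n + 1) / Real.log (1 + (Real.sqrt 5 - 1) / 2)⌋ ∧
      ((∑ s ∈ Finset.Icc 1 m, b s : ℕ) : ℤ) ≤
        ⌊(Real.log n + 1) / Real.log (2 + (Real.sqrt 5 - 1) / 2)⌋ :=
  zeckendorf_length_general n m b hb hbm hnoconsec hsum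
end

section
/- For every integer n ≥ 1 and real φ with nφ not an integer multiple of π, Σ_{r=0}^{n-1} cot(φ + πr/n) = n·cot(nφ). -/
/-!
With `w = exp (2iφ)` and `ζ = exp (2πi/n)`, the terms are `cot (φ + πr/n) = i - 2i / (1 - w ζ^r)`.
Expanding `(1 - y)⁻¹ = (∑_{k<n} y^k) / (1 - y^n)` for `y = w ζ^r`, whose `n`-th power is `w^n`,
and summing over `r` kills every power `ζ^{rk}` with `0 < k < n`, so that
`∑_r (1 - w ζ^r)⁻¹ = n / (1 - w^n)`; since `w^n = exp (2inφ)` this is `n cot (nφ)`.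
-/

open Real Finset

theorem geom_sum_eq_zero_of_pow_eq_one {R : Type*} [CommRing R] [IsDomain R] {y : R} {n : ℕ}
    (hy : y ^ n = 1) (hy1 : y ≠ 1) : ∑ i ∈ range n, y ^ i = 0 := by
  have h := geom_sum_mul y n
  rw [hy, sub_self] at h
  exact (mul_eq_zero.1 h).resolve_right (sub_ne_zero.2 hy1)

theorem mul_pow_eq_pow_of_pow_eq_one {M : Type*} [CommMonoid M] {ζ : M} {n : ℕ} (hζ : ζ ^ n = 1)
    (x : M) (r : ℕ) : (x * ζ ^ r) ^ n = x ^ n := by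
  rw [mul_pow, ← pow_mul, mul_comm r n, pow_mul, hζ, one_pow, mul_one]

theorem inv_one_sub_eq_geom_sum_div {K : Type*} [Field K] {y : K} {n : ℕ} (hy : y ^ n ≠ 1) :
    (1 - y)⁻¹ = (∑ k ∈ range n, y ^ k) / (1 - y ^ n) := by
  have hy1 : y ≠ 1 := by rintro rfl; exact hy (one_pow n)
  have h1 : 1 - y ≠ 0 := sub_ne_zero.2 hy1.symm
  have hn : 1 - y ^ n ≠ 0 := sub_ne_zero.2 (Ne.symm hy)
  rw [geom_sum_eq hy1, ← neg_sub 1 y, ← neg_sub 1 (y ^ n), neg_div_neg_eq]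
  field_simp

namespace IsPrimitiveRoot

theorem sum_pow_pow_eq_ite {R : Type*} [CommRing R] [IsDomain R] {ζ : R} {n k : ℕ}
    (hζ : IsPrimitiveRoot ζ n) (hk : k < n) :
    ∑ r ∈ range n, (ζ ^ r) ^ k = if k = 0 then (n : R) else 0 := by
  split_ifs with hk0
  · simp [hk0]
  · simp_rw [pow_right_comm ζ _ k]
    exact geom_sum_eq_zero_of_pow_eq_one (by rw [pow_right_comm, hζ.pow_eq_one, one_pow])
      (hζ.pow_ne_one_of_pos_of_lt hk0 hk)

theorem sum_inv_one_sub_mul_pow {K : Type*} [Field K] {ζ x : K} {n : ℕ}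
    (hζ : IsPrimitiveRoot ζ n) (hx : x ^ n ≠ 1) :
    ∑ r ∈ range n, (1 - x * ζ ^ r)⁻¹ = n / (1 - x ^ n) := by
  have hxζ (r : ℕ) : (x * ζ ^ r) ^ n = x ^ n := mul_pow_eq_pow_of_pow_eq_one hζ.pow_eq_one x r
  calc ∑ r ∈ range n, (1 - x * ζ ^ r)⁻¹
      = ∑ r ∈ range n, (∑ k ∈ range n, x ^ k * (ζ ^ r) ^ k) / (1 - x ^ n) := by
        refine sum_congr rfl fun r _ => ?_
        rw [inv_one_sub_eq_geom_sum_div ((hxζ r).symm ▸ hx), hxζ]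
        simp_rw [mul_pow]
    _ = (∑ k ∈ range n, x ^ k * ∑ r ∈ range n, (ζ ^ r) ^ k) / (1 - x ^ n) := by
        rw [← sum_div, sum_comm]
        simp_rw [mul_sum]
    _ = n / (1 - x ^ n) := by
        rw [sum_congr rfl fun k hk => by rw [hζ.sum_pow_pow_eq_ite (mem_range.1 hk)]]
        rcases n.eq_zero_or_pos with rfl | hn
        · simp
        · simp [hn]

end IsPrimitiveRoot

namespace Complex

theorem cot_eq_I_sub_two_mul_I_div {z : ℂ} (hz : exp (2 * I * z) ≠ 1) :
    cot z = I - 2 * I * (1 - exp (2 * I * z))⁻¹ := by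
  have : 1 - exp (2 * I * z) ≠ 0 := sub_ne_zero.2 hz.symm
  rw [cot_eq_exp_ratio]
  field_simp
  linear_combination (1 + exp (2 * I * z)) * I_sq

theorem exp_two_mul_I_mul_ne_one {z : ℂ} (hz : ∀ k : ℤ, z ≠ k * π) : exp (2 * I * z) ≠ 1 := by
  rw [Ne, exp_eq_one_iff]
  rintro ⟨k, hk⟩
  exact hz k (mul_left_cancel₀ (by simp : 2 * I ≠ 0) (by rw [hk]; ring))

end Complex

theorem cot_sum_general (n : ℕ) (φ : ℝ) (h : ∀ k : ℤ, (n : ℝ) * φ ≠ k * π) :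
    ∑ r ∈ Finset.range n, Real.cot (φ + π * r / n) = n * Real.cot (n * φ) := by
  have hn : n ≠ 0 := by rintro rfl; exact h 0 (by simp)
  set w := Complex.exp (2 * Complex.I * φ)
  set ζ := Complex.exp (2 * π * Complex.I / n)
  have hζ : IsPrimitiveRoot ζ n := Complex.isPrimitiveRoot_exp n hn
  have hwn : w ^ n = Complex.exp (2 * Complex.I * (n * φ)) := by
    rw [← Complex.exp_nat_mul]; ring_nf
  have hw : w ^ n ≠ 1 := hwn ▸ Complex.exp_two_mul_I_mul_ne_one fun k hk =>
    h k (Complex.ofReal_injective (by push_cast; exact hk))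
  have hexp (r : ℕ) : Complex.exp (2 * Complex.I * (φ + π * r / n)) = w * ζ ^ r := by
    rw [← Complex.exp_nat_mul, ← Complex.exp_add]; congr 1; field_simp
  have hexp_ne (r : ℕ) : w * ζ ^ r ≠ 1 := fun h1 =>
    hw (by rw [← mul_pow_eq_pow_of_pow_eq_one hζ.pow_eq_one w r, h1, one_pow])
  apply Complex.ofReal_injective
  push_cast
  calc ∑ r ∈ range n, Complex.cot (φ + π * r / n)
      = ∑ r ∈ range n, (Complex.I - 2 * Complex.I * (1 - w * ζ ^ r)⁻¹) :=
        sum_congr rfl fun r _ => by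
          rw [Complex.cot_eq_I_sub_two_mul_I_div (hexp r ▸ hexp_ne r), hexp]
    _ = n * (Complex.I - 2 * Complex.I * (1 - w ^ n)⁻¹) := by
        rw [sum_sub_distrib, ← mul_sum, hζ.sum_inv_one_sub_mul_pow hw]
        simp only [sum_const, card_range, nsmul_eq_mul]
        ring
    _ = n * Complex.cot (n * φ) := by
        rw [Complex.cot_eq_I_sub_two_mul_I_div (hwn ▸ hw), hwn]

theorem cot_sum (n : ℕ) (hn : 1 ≤ n) (φ : ℝ) (h : ∀ k : ℤ, (n : ℝ) * φ ≠ k * π) :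
    ∑ r ∈ Finset.range n, Real.cot (φ + π * r / n) = n * Real.cot (n * φ) :=
  cot_sum_general n φ h
end

section
/- For every even integer n ≥ 2, ∏_{r=1, r≠n/2}^{n-1} 2 sin(2πr/n) = (−1)^{n/2 − 1} · n²/4. -/
open Real Finset

/-!
With `n = 2m`, the factors for `r` and `r + m` differ by a sign, since `sin (x + π) = -sin x`.
So the product is `(-1)^(m-1)` times the square of `∏_{k=1}^{m-1} 2 sin (π k / m)`, and this
product equals `m`: it is the norm of `∏_{k=1}^{m-1} (1 - ζ^k) = m` for the primitive `m`-th root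
of unity `ζ = exp (2πi/m)`, because `|1 - exp (iθ)| = 2 sin (θ/2)` for `θ ∈ [0, 2π]`.
-/

lemma norm_one_sub_exp_two_pi_mul_I {x : ℝ} (h₀ : 0 ≤ x) (h₁ : x ≤ 1) :
    ‖1 - Complex.exp (2 * π * x * Complex.I)‖ = 2 * sin (π * x) := by
  have hsin : 0 ≤ sin (π * x) :=
    sin_nonneg_of_nonneg_of_le_pi (by positivity) (by nlinarith [pi_pos])
  rw [norm_sub_rev, show 2 * π * x * Complex.I = Complex.I * ↑(2 * (π * x)) by push_cast; ring,
    Complex.norm_exp_I_mul_ofReal_sub_one, mul_div_cancel_left₀ _ two_ne_zero,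
    Real.norm_eq_abs, abs_of_nonneg (mul_nonneg zero_le_two hsin)]

theorem prod_Ico_two_sin_pi_mul_div {m : ℕ} (hm : m ≠ 0) :
    ∏ k ∈ Ico 1 m, 2 * sin (π * k / m) = m := by
  obtain ⟨n, rfl⟩ := Nat.exists_eq_add_one_of_ne_zero hm
  have key := congrArg (‖·‖) (Complex.isPrimitiveRoot_exp (n + 1) hm).prod_one_sub_pow_eq_order
  simp only [norm_prod] at key
  rw [prod_Ico_eq_prod_range, Nat.add_sub_cancel]
  convert key using 1
  · refine prod_congr rfl fun k hk => ?_
    have hk : (k + 1 : ℝ) / (n + 1) ≤ 1 :=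
      (div_le_one (by positivity)).2 (by exact_mod_cast Nat.succ_le_succ (mem_range.1 hk).le)
    calc 2 * sin (π * ↑(1 + k) / ↑(n + 1))
        = 2 * sin (π * ((k + 1) / (n + 1))) := by push_cast; ring_nf
      _ = ‖1 - Complex.exp (2 * π * ↑((k + 1) / (n + 1) : ℝ) * Complex.I)‖ :=
        (norm_one_sub_exp_two_pi_mul_I (by positivity) hk).symm
      _ = _ := by rw [← Complex.exp_nat_mul]; push_cast; ring_nf
  · norm_cast

theorem prod_Ico_two_sin_pi_mul_add_div {m : ℕ} (hm : m ≠ 0) :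
    ∏ k ∈ Ico 1 m, 2 * sin (π * ↑(k + m) / m) = (-1) ^ (m - 1) * m := by
  have hshift (k : ℕ) : 2 * sin (π * ↑(k + m) / m) = -1 * (2 * sin (π * k / m)) := by
    rw [show π * ↑(k + m) / m = π * k / m + π by push_cast; field_simp, sin_add_pi]
    ring
  simp only [hshift, prod_mul_distrib, prod_const, Nat.card_Ico, prod_Ico_two_sin_pi_mul_div hm]

theorem sin_prod_even_val (n : ℕ) (hn : 2 ≤ n) (heven : Even n) :
    ∏ r ∈ (Finset.Icc 1 (n - 1)).erase (n / 2), 2 * Real.sin (2 * π * r / n) =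
      (-1) ^ (n / 2 - 1) * ((n : ℝ) ^ 2 / 4) := by
  obtain ⟨m, rfl⟩ := heven
  have hm : m ≠ 0 := by omega
  have hsplit : (Icc 1 (m + m - 1)).erase ((m + m) / 2) = Ico 1 m ∪ Ico (1 + m) (m + m) := by
    ext r
    simp only [mem_erase, mem_Icc, mem_union, mem_Ico]
    omega
  have hdisj : Disjoint (Ico 1 m) (Ico (1 + m) (m + m)) :=
    disjoint_left.2 fun r h₁ h₂ => by simp only [mem_Ico] at h₁ h₂; omega
  have harg (r : ℕ) : 2 * π * r / ↑(m + m) = π * r / m := by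
    push_cast; field_simp; ring
  rw [hsplit, prod_union hdisj, ← prod_Ico_add']
  simp only [harg]
  rw [prod_Ico_two_sin_pi_mul_div hm, prod_Ico_two_sin_pi_mul_add_div hm,
    show (m + m) / 2 = m by omega]
  push_cast
  ring
end

section
/- Let ω = (√5 − 1)/2 and define P_n = ∏_{r=1}^{n} |2 sin(πrω)|. If the subsequence P_{F_n} converges to a constant c > 0 (where F_n is the n-th Fibonacci number), then P_{F_n − 1}/F_n converges to c√5/(2π). -/
open Real Finset Filter

/-!
Since `(√5 - 1)/2 = φ⁻¹ = -ψ` and `ψ F_{n+1} + F_n = ψ^{n+1}`, the last factor of `P_{F_n}` is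
`|2 sin(π F_n φ⁻¹)| = |2 sin(π ψ^n)|`, so `P_{F_n - 1} / F_n = P_{F_n} / (F_n |2 sin(π ψ^n)|)`.
As `ψ^n → 0`, `|2 sin(π ψ^n)| ~ 2π |ψ|^n = 2π φ^{-n}`, and by Binet's formula `F_n φ^{-n} → 1/√5`,
so the denominator tends to `2π/√5`.
-/

open scoped goldenRatio

noncomputable def sudlerProduct (α : ℝ) (n : ℕ) : ℝ :=
  ∏ r ∈ Icc 1 n, |2 * sin (π * r * α)|

lemma sudlerProduct_succ (α : ℝ) (n : ℕ) :
    sudlerProduct α (n + 1) = sudlerProduct α n * |2 * sin (π * ((n + 1 : ℕ) : ℝ) * α)| :=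
  prod_Icc_succ_top (Nat.le_add_left 1 n) _

lemma sin_eq_mul_sinc (x : ℝ) : sin x = x * sinc x := by
  rcases eq_or_ne x 0 with rfl | hx
  · simp
  · rw [sinc_of_ne_zero hx, mul_div_cancel₀ _ hx]

lemma sqrt_five_sub_one_div_two_eq_inv_goldenRatio : (√5 - 1) / 2 = φ⁻¹ := by
  rw [inv_goldenRatio]
  ring

lemma abs_sin_pi_mul_fib_succ_mul_inv_goldenRatio (n : ℕ) :
    |sin (π * Nat.fib (n + 1) * φ⁻¹)| = |sin (π * ψ ^ (n + 1))| := by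
  have harg : π * Nat.fib (n + 1) * φ⁻¹ = Nat.fib n * π - π * ψ ^ (n + 1) := by
    rw [inv_goldenRatio]
    linear_combination (-π) * goldenConj_mul_fib_succ_add_fib n
  rw [harg, sin_nat_mul_pi_sub, abs_neg, abs_mul, abs_pow, abs_neg, abs_one, one_pow, one_mul]

lemma sudlerProduct_inv_goldenRatio_fib_succ (n : ℕ) :
    sudlerProduct φ⁻¹ (Nat.fib (n + 1)) =
      sudlerProduct φ⁻¹ (Nat.fib (n + 1) - 1) * |2 * sin (π * ψ ^ (n + 1))| := by
  have hfib : Nat.fib (n + 1) - 1 + 1 = Nat.fib (n + 1) :=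
    Nat.sub_add_cancel (Nat.fib_pos.mpr n.succ_pos)
  conv_lhs => rw [← hfib]
  rw [sudlerProduct_succ, hfib, abs_mul, abs_mul, abs_sin_pi_mul_fib_succ_mul_inv_goldenRatio]

lemma tendsto_fib_mul_abs_goldenConj_pow :
    Tendsto (fun n => (Nat.fib n : ℝ) * |ψ ^ n|) atTop (nhds (√5)⁻¹) := by
  have hbinet (n : ℕ) : (Nat.fib n : ℝ) * |ψ ^ n| = (1 - (ψ / φ) ^ n) / √5 := by
    rw [abs_pow, abs_of_neg goldenConj_neg, ← inv_goldenRatio, coe_fib_eq, inv_pow,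
      div_mul_eq_mul_div, sub_mul, mul_inv_cancel₀ (pow_ne_zero n goldenRatio_ne_zero),
      ← div_eq_mul_inv, ← div_pow]
  have hratio : |ψ / φ| < 1 := by
    rw [abs_div, abs_of_pos goldenRatio_pos, div_lt_one goldenRatio_pos]
    exact abs_lt.mpr ⟨by linarith [neg_one_lt_goldenConj, one_lt_goldenRatio],
      by linarith [goldenConj_neg, goldenRatio_pos]⟩
  simp only [hbinet]
  simpa using ((tendsto_pow_atTop_nhds_zero_of_abs_lt_one hratio).const_sub 1).div_const √5

lemma tendsto_fib_mul_abs_two_mul_sin_pi_mul_goldenConj_pow :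
    Tendsto (fun n => (Nat.fib n : ℝ) * |2 * sin (π * ψ ^ n)|) atTop (nhds (2 * π / √5)) := by
  have hsinc : Tendsto (fun n => sinc (π * ψ ^ n)) atTop (nhds 1) := by
    have hpow := tendsto_pow_atTop_nhds_zero_of_abs_lt_one
      (abs_lt.mpr ⟨neg_one_lt_goldenConj, goldenConj_neg.trans one_pos⟩)
    simpa [Function.comp_def] using continuous_sinc.continuousAt.tendsto.comp (hpow.const_mul π)
  have hprod := (tendsto_fib_mul_abs_goldenConj_pow.const_mul (2 * π)).mul hsinc.abs
  convert hprod using 1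
  · ext n
    rw [sin_eq_mul_sinc, abs_mul, abs_mul, abs_mul, abs_two, abs_of_pos pi_pos]
    ring
  · simp [div_eq_mul_inv]

theorem PFn_sub_one_div_Fn_tendsto_general (c : ℝ)
    (P : ℕ → ℝ)
    (hP : ∀ n, P n = ∏ r ∈ Finset.Icc 1 n, |2 * Real.sin (π * r * ((Real.sqrt 5 - 1) / 2))|)
    (hconv : Filter.Tendsto (fun n => P (Nat.fib n)) Filter.atTop (nhds c)) :
    Filter.Tendsto (fun n => P (Nat.fib n - 1) / (Nat.fib n : ℝ)) Filter.atTop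
      (nhds (c * Real.sqrt 5 / (2 * π))) := by
  obtain rfl : P = sudlerProduct φ⁻¹ := funext fun n => by
    rw [hP, sudlerProduct, sqrt_five_sub_one_div_two_eq_inv_goldenRatio]
  have hden := (tendsto_add_atTop_iff_nat 1).mpr
    tendsto_fib_mul_abs_two_mul_sin_pi_mul_goldenConj_pow
  have hlimit : (2 * π / √5) ≠ 0 := by positivity
  rw [← tendsto_add_atTop_iff_nat 1, show c * √5 / (2 * π) = c / (2 * π / √5) by field_simp]
  refine (((tendsto_add_atTop_iff_nat 1).mpr hconv).div hden hlimit).congr' ?_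
  -- the denominators tend to a nonzero limit, so the factor `|2 sin(π ψ^(n+1))|` is eventually nonzero
  filter_upwards [hden.eventually_ne hlimit] with n hn
  rw [Pi.div_apply, sudlerProduct_inv_goldenRatio_fib_succ,
    mul_div_mul_right _ _ (right_ne_zero_of_mul hn)]

theorem PFn_sub_one_div_Fn_tendsto (c : ℝ) (hc : 0 < c)
    (P : ℕ → ℝ)
    (hP : ∀ n, P n = ∏ r ∈ Finset.Icc 1 n, |2 * Real.sin (π * r * ((Real.sqrt 5 - 1) / 2))|)
    (hconv : Filter.Tendsto (fun n => P (Nat.fib n)) Filter.atTop (nhds c)) :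
    Filter.Tendsto (fun n => P (Nat.fib n - 1) / (Nat.fib n : ℝ)) Filter.atTop
      (nhds (c * Real.sqrt 5 / (2 * π))) :=
  PFn_sub_one_div_Fn_tendsto_general c P hP hconv
end
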